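/- arXiv:2007.03575 — 2 statements merged into one kernel-verified Lean document; each statement's English description precedes it below -/
import Mathlib

section
/- Suppose two agents have an edge conflict ⟨a_i, a_j, u, v, t⟩, i.e., in some pair of paths agent a_i moves from u to v and agent a_j moves from v to u between timesteps t-1 and t. Then there is no pair of conflict-free paths for the two agents that simultaneously violates both constraint sets C₁ = {⟨a_i, u, v, t⟩, ⟨a_i, u, t⟩} and C₂ = {⟨a_j, v, u, t⟩}. Here violating C₁ means a_i moves from u to v between t-1 and t, or a_i occupies u at time t; violating C₂ means a_j moves from v to u between t-1 and t. -/
/-- A pair of paths is conflict-free: no vertex conflicts and no edge (swap)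
conflicts. -/
def ConflictFree {V : Type*} (p q : ℕ → V) : Prop :=
  (∀ s, p s ≠ q s) ∧ ∀ s, 1 ≤ s → ¬(p s = q (s - 1) ∧ p (s - 1) = q s)

/-- If two agents have an edge conflict `⟨u, v, t⟩`, then no pair of
conflict-free paths violates both `C₁ = {⟨a_i,u,v,t⟩, ⟨a_i,u,t⟩}` and
`C₂ = {⟨a_j,v,u,t⟩}`. -/
theorem no_conflictFree_violating_C1_C2 {V : Type*} (u v : V) (t : ℕ)
    (ht : 1 ≤ t) (p₀ q₀ : ℕ → V)
    (hconf : p₀ (t - 1) = u ∧ p₀ t = v ∧ q₀ (t - 1) = v ∧ q₀ t = u) :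
    ¬ ∃ p q : ℕ → V, ConflictFree p q ∧
      ((p (t - 1) = u ∧ p t = v) ∨ p t = u) ∧
      (q (t - 1) = v ∧ q t = u) := by
  rintro ⟨p, q, ⟨hv, he⟩, hC1, hq1, hq2⟩
  rcases hC1 with ⟨hp1, hp2⟩ | hp
  · exact he t ht ⟨hp2.trans hq1.symm, hp1.trans hq2.symm⟩
  · exact hv t (hp.trans hq2.symm)
end

section
/- There is no pair of conflict-free paths (p for agent a_i, q for agent a_j) such that p violates the constraint set C₁ = {⟨a_i, u, v, t⟩, ⟨a_i, u, v, t+1⟩} and q violates C₂ = {⟨a_j, v, u, t⟩, ⟨a_j, v, u, t+1⟩}, where ⟨a, x, y, s⟩ denotes the edge constraint prohibiting agent a from moving from x to y between timesteps s-1 and s. -/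
/-- No conflict-free pair `(p, q)` has `p` violating
`C₁ = {⟨a_i,u,v,t⟩, ⟨a_i,u,v,t+1⟩}` and `q` violating
`C₂ = {⟨a_j,v,u,t⟩, ⟨a_j,v,u,t+1⟩}`. -/
theorem no_conflictFree_violating_headon_edge {V : Type*} (u v : V)
    (huv : u ≠ v) (t : ℕ) (ht : 1 ≤ t) :
    ¬ ∃ p q : ℕ → V, ConflictFree p q ∧
      ((p (t - 1) = u ∧ p t = v) ∨ (p t = u ∧ p (t + 1) = v)) ∧
      ((q (t - 1) = v ∧ q t = u) ∨ (q t = v ∧ q (t + 1) = u)) := by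
  rintro ⟨p, q, ⟨hv, he⟩, hp | hp, hq | hq⟩
  · exact he t ht ⟨hp.2.trans hq.1.symm, hp.1.trans hq.2.symm⟩
  · exact hv t (hp.2.trans hq.1.symm)
  · exact hv t (hp.1.trans hq.2.symm)
  · exact he (t + 1) (by omega) ⟨by simpa using hp.2.trans hq.1.symm,
      by simpa using hp.1.trans hq.2.symm⟩
end
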